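/- Covering Lemma: Let G be a finite simple connected graph rooted at r ∈ V(G), let w' be a conic combination (a nonnegative real linear combination) of weight functions of tree strategies of G rooted at r, and let K and M be positive constants. If w'(v) ≥ K for all v ∈ V(G)\{r} and Σ_{v∈V(G)\{r}} w'(v) < M, then π(G, r) ≤ ⌊M/K⌋ + 1. -/

import Mathlib

open Finset

/-- A single pebbling move on graph `G`: remove two pebbles from a vertex `u` and
place one pebble on a vertex `v` adjacent to `u`. -/
def IsPebblingMove {V : Type*} (G : SimpleGraph V) (C C' : V → ℕ) : Prop :=
  ∃ u v, G.Adj u v ∧ 2 ≤ C u ∧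
    C' u = C u - 2 ∧ C' v = C v + 1 ∧ ∀ w, w ≠ u → w ≠ v → C' w = C w

/-- A configuration `C` is `r`-solvable if some sequence of pebbling moves starting
from `C` places at least one pebble on `r`. -/
def Solvable {V : Type*} (G : SimpleGraph V) (r : V) (C : V → ℕ) : Prop :=
  ∃ C', Relation.ReflTransGen (IsPebblingMove G) C C' ∧ 1 ≤ C' r

/-- The rooted pebbling number `π(G, r)`: the smallest `k` such that every
configuration of size `k` is `r`-solvable. -/
noncomputable def pebblingNumber {V : Type*} [Fintype V] (G : SimpleGraph V) (r : V) : ℕ :=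
  sInf {k : ℕ | ∀ C : V → ℕ, (∑ v, C v) = k → Solvable G r C}

/-- A tree strategy of `G` rooted at `r`: a subtree of `G` containing `r` (encoded by its
vertex set and parent map) together with an associated nonnegative weight function. -/
structure TreeStrategy {V : Type*} (G : SimpleGraph V) (r : V) where
  /-- the vertices of the subtree -/
  verts : Set V
  /-- the parent map of the subtree (towards the root) -/
  parent : V → V
  root_mem : r ∈ verts
  parent_mem : ∀ v ∈ verts, v ≠ r → parent v ∈ verts
  parent_adj : ∀ v ∈ verts, v ≠ r → G.Adj (parent v) v
  reaches_root : ∀ v ∈ verts, ∃ n : ℕ, parent^[n] v = r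
  /-- the weight function -/
  weight : V → ℝ
  weight_nonneg : ∀ v, 0 ≤ weight v
  weight_root : weight r = 0
  weight_parent : ∀ v ∈ verts, v ≠ r → ¬ G.Adj v r → 2 * weight v ≤ weight (parent v)
  weight_zero : ∀ v ∉ verts, weight v = 0

/-!
Each tree strategy `(T, w)` gives a potential `C ↦ ∑ v, w v * C v` on configurations.
Moving two pebbles from a vertex of `T` to its parent never decreases the potential, since
`w (parent u) ≥ 2 w u`; and an unsolvable configuration can always make such a move until at
most one pebble is left on each vertex of `T`, where the potential is at most `∑_{v ≠ r} w v`.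
Hence every unsolvable configuration has potential at most `∑_{v ≠ r} w v`, and the same holds
for conic combinations `w'`. Since `w' ≥ K` off the root, an unsolvable configuration has
fewer than `M / K` pebbles.
-/

section Moves

variable {V : Type*} (G : SimpleGraph V) (r : V)

theorem Solvable.of_isPebblingMove {C C' : V → ℕ} (hm : IsPebblingMove G C C')
    (h : Solvable G r C') : Solvable G r C :=
  let ⟨D, hD, hr⟩ := h
  ⟨D, .head hm hD, hr⟩

theorem solvable_of_pos {C : V → ℕ} (h : 1 ≤ C r) : Solvable G r C :=
  ⟨C, .refl, h⟩

variable [DecidableEq V]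

theorem isPebblingMove_update {u t : V} (hadj : G.Adj u t) {C : V → ℕ} (h2 : 2 ≤ C u) :
    IsPebblingMove G C (Function.update (Function.update C u (C u - 2)) t (C t + 1)) := by
  refine ⟨u, t, hadj, h2, ?_, ?_, fun w hwu hwt => ?_⟩
  · rw [Function.update_of_ne (G.ne_of_adj hadj), Function.update_self]
  · rw [Function.update_self]
  · rw [Function.update_of_ne hwt, Function.update_of_ne hwu]

theorem solvable_of_adj {u : V} (hadj : G.Adj u r) {C : V → ℕ} (h2 : 2 ≤ C u) :
    Solvable G r C :=
  (solvable_of_pos G r (by simp)).of_isPebblingMove G r (isPebblingMove_update G hadj h2)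

theorem sum_mul_update_sub_two_add_one [Fintype V] (f : V → ℝ) {C : V → ℕ} {u t : V}
    (hut : u ≠ t) (h2 : 2 ≤ C u) :
    ∑ v, f v * (Function.update (Function.update C u (C u - 2)) t (C t + 1) v : ℕ) =
      ∑ v, f v * C v - 2 * f u + f t := by
  have hpoint : ∀ v, ((Function.update (Function.update C u (C u - 2)) t (C t + 1) v : ℕ) : ℝ) =
      C v - (if v = u then 2 else 0) + (if v = t then 1 else 0) := by
    intro v
    rcases eq_or_ne v t with rfl | hvt
    · simp [hut.symm]
    rcases eq_or_ne v u with rfl | hvu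
    · simp [hvt, Nat.cast_sub h2]
    · simp [hvt, hvu]
  simp only [hpoint, mul_add, mul_sub, Finset.sum_add_distrib, Finset.sum_sub_distrib, mul_ite,
    mul_zero, mul_one, Finset.sum_ite_eq', Finset.mem_univ, if_true, mul_comm (f u)]

end Moves

namespace TreeStrategy

variable {V : Type*} [Fintype V] [DecidableEq V] {G : SimpleGraph V} {r : V}
  (T : TreeStrategy G r)

theorem sum_weight_mul_le_of_le_one {C : V → ℕ} (hC : ∀ v ∈ T.verts, C v ≤ 1) :
    ∑ v, T.weight v * C v ≤ ∑ v ∈ univ.erase r, T.weight v := by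
  rw [← Finset.add_sum_erase _ _ (mem_univ r), T.weight_root, zero_mul, zero_add]
  refine Finset.sum_le_sum fun v _ => ?_
  by_cases hv : v ∈ T.verts
  · exact mul_le_of_le_one_right (T.weight_nonneg v) (by exact_mod_cast hC v hv)
  · rw [T.weight_zero v hv, zero_mul]

theorem sum_weight_mul_le_of_not_solvable {C : V → ℕ} (hC : ¬ Solvable G r C) :
    ∑ v, T.weight v * C v ≤ ∑ v ∈ univ.erase r, T.weight v := by
  induction hN : ∑ v, C v using Nat.strong_induction_on generalizing C with
  | _ N ih =>
  by_cases hmove : ∃ u ∈ T.verts, 2 ≤ C u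
  swap
  · push Not at hmove
    exact T.sum_weight_mul_le_of_le_one fun v hv => Nat.lt_succ_iff.mp (hmove v hv)
  obtain ⟨u, hu, hu2⟩ := hmove
  have hur : u ≠ r := by
    rintro rfl
    exact hC (solvable_of_pos G u (by omega))
  have hnadj : ¬ G.Adj u r := fun hadj => hC (solvable_of_adj G r hadj hu2)
  have hadj : G.Adj u (T.parent u) := (T.parent_adj u hu hur).symm
  have hne := G.ne_of_adj hadj
  set C' := Function.update (Function.update C u (C u - 2)) (T.parent u) (C (T.parent u) + 1)
  have hC' : ¬ Solvable G r C' :=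
    mt (Solvable.of_isPebblingMove G r (isPebblingMove_update G hadj hu2)) hC
  have hsize := sum_mul_update_sub_two_add_one (fun _ => 1) hne hu2
  have hpot := sum_mul_update_sub_two_add_one T.weight hne hu2
  simp only [one_mul] at hsize
  have hlt : ∑ v, C' v < N := by
    rw [← hN]
    exact_mod_cast (by linarith : ∑ v, (C' v : ℝ) < ∑ v, (C v : ℝ))
  have := ih _ hlt hC' rfl
  linarith [T.weight_parent u hu hur hnadj]

end TreeStrategy

theorem sum_conic_mul_le {ι V : Type*} [Fintype ι] [Fintype V] (s : Finset V) {c : ι → ℝ}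
    (hc : ∀ i, 0 ≤ c i) (w : ι → V → ℝ) (x : V → ℝ)
    (h : ∀ i, ∑ v, w i v * x v ≤ ∑ v ∈ s, w i v) :
    ∑ v, (∑ i, c i * w i v) * x v ≤ ∑ v ∈ s, ∑ i, c i * w i v :=
  calc ∑ v, (∑ i, c i * w i v) * x v = ∑ i, c i * ∑ v, w i v * x v := by
        simp only [Finset.sum_mul, Finset.mul_sum, mul_assoc]
        exact Finset.sum_comm
    _ ≤ ∑ i, c i * ∑ v ∈ s, w i v :=
        Finset.sum_le_sum fun i _ => mul_le_mul_of_nonneg_left (h i) (hc i)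
    _ = ∑ v ∈ s, ∑ i, c i * w i v := by
        simp only [Finset.mul_sum]
        exact Finset.sum_comm

theorem mul_sum_le_sum_mul_of_root_eq_zero {V : Type*} [Fintype V] [DecidableEq V] {r : V}
    {w : V → ℝ} {K : ℝ} (hlow : ∀ v, v ≠ r → K ≤ w v) {C : V → ℕ} (hCr : C r = 0) :
    K * ∑ v, (C v : ℝ) ≤ ∑ v, w v * C v := by
  rw [Finset.mul_sum]
  refine Finset.sum_le_sum fun v _ => ?_
  rcases eq_or_ne v r with rfl | hv
  · simp [hCr]
  · exact mul_le_mul_of_nonneg_right (hlow v hv) (Nat.cast_nonneg _)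

theorem covering_lemma_general {V : Type*} [Fintype V] [DecidableEq V]
    (G : SimpleGraph V) (r : V)
    (n : ℕ) (S : Fin n → TreeStrategy G r) (c : Fin n → ℝ) (hc : ∀ i, 0 ≤ c i)
    (w' : V → ℝ) (hw' : ∀ v, w' v = ∑ i, c i * (S i).weight v)
    (K M : ℝ) (hK : 0 < K)
    (hlow : ∀ v, v ≠ r → K ≤ w' v)
    (hsum : ∑ v ∈ Finset.univ.erase r, w' v < M) :
    pebblingNumber G r ≤ ⌊M / K⌋₊ + 1 := by
  refine Nat.sInf_le fun C hCsum => ?_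
  by_contra hC
  have hCr : C r = 0 := by
    by_contra h
    exact hC (solvable_of_pos G r (Nat.one_le_iff_ne_zero.mpr h))
  have hpot : ∑ v, w' v * C v ≤ ∑ v ∈ univ.erase r, w' v := by
    obtain rfl : w' = fun v => ∑ i, c i * (S i).weight v := funext hw'
    exact sum_conic_mul_le _ hc _ _ fun i => (S i).sum_weight_mul_le_of_not_solvable hC
  have hcount := mul_sum_le_sum_mul_of_root_eq_zero hlow hCr
  rw [← Nat.cast_sum, hCsum] at hcount
  have hfloor := (div_lt_iff₀' hK).mp (Nat.lt_floor_add_one (M / K))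
  push_cast at hcount
  linarith

/-- **Covering Lemma.** Let `w'` be a conic combination of weight functions of tree
strategies of `G` rooted at `r`, and let `K, M > 0`. If `w'(v) ≥ K` for all `v ≠ r`
and `Σ_{v ≠ r} w'(v) < M`, then `π(G, r) ≤ ⌊M/K⌋ + 1`. -/
theorem covering_lemma {V : Type*} [Fintype V] [DecidableEq V]
    (G : SimpleGraph V) (hG : G.Connected) (r : V)
    (n : ℕ) (S : Fin n → TreeStrategy G r) (c : Fin n → ℝ) (hc : ∀ i, 0 ≤ c i)
    (w' : V → ℝ) (hw' : ∀ v, w' v = ∑ i, c i * (S i).weight v)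
    (K M : ℝ) (hK : 0 < K) (hM : 0 < M)
    (hlow : ∀ v, v ≠ r → K ≤ w' v)
    (hsum : ∑ v ∈ Finset.univ.erase r, w' v < M) :
    pebblingNumber G r ≤ ⌊M / K⌋₊ + 1 :=
  covering_lemma_general G r n S c hc w' hw' K M hK hlow hsum
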